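/- Let q = (q_ij) be a multiplicatively antisymmetric n×n matrix. If |q_ij| ≤ 1 whenever i < j, then the weight function satisfies w_q(k) = ∏_{i<j} |q_ij|^{k_i k_j} for all k ∈ ℤ₊ⁿ; if |q_ij| ≥ 1 whenever i < j, then w_q(k) = 1 for all k ∈ ℤ₊ⁿ. -/

import Mathlib

/-!
The quantum affine space acts on `ℂ[ℕⁿ]` by `x a • e_m = (∏_{j<a} q a j ^ m j) e_{m + e_a}`
(multiplication of ordered monomials), and under this action a word `L` sends `e_0` to
`c(L) e_{count L}`. Hence `x_α = λ x_{σα}` forces `c(α) = λ c(σα)`, and `c(δ(k)) = 1` since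
`δ(k)` is sorted; so `|λ| = |c(σ δ(k))|⁻¹`.

Reading a word from right to left, `c` collects `q a b` each time a letter `a` is placed in front
of a smaller letter `b`. If `|q i j| ≤ 1` for `i < j`, each such inversion contributes a factor
`|q a b| ≥ 1`, and a pair of letters `i < j` gives at most `k i * k j` inversions, with equality
for the decreasing word; this gives `|c| ≤ ∏_{i<j} |q i j|^(-k i k j)` with equality at the
reversal. If `|q i j| ≥ 1` for `i < j`, every factor has modulus `≤ 1`, and `σ = 1` gives `λ = 1`.
-/

noncomputable section

/-- `q` is multiplicatively antisymmetric: `q i i = 1` and `q j i * q i j = 1`. -/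
def MultAntisym (n : ℕ) (q : Fin n → Fin n → ℂ) : Prop :=
  (∀ i, q i i = 1) ∧ (∀ i j, q j i * q i j = 1)

/-- Relations of the quantum affine space: `x i * x j = q i j • (x j * x i)`. -/
def QRel (n : ℕ) (q : Fin n → Fin n → ℂ) :
    FreeAlgebra ℂ (Fin n) → FreeAlgebra ℂ (Fin n) → Prop :=
  fun a b => ∃ i j, a = FreeAlgebra.ι ℂ i * FreeAlgebra.ι ℂ j ∧
    b = q i j • (FreeAlgebra.ι ℂ j * FreeAlgebra.ι ℂ i)

/-- The generators `x i` of the quantum affine space algebra `O_q^reg(ℂⁿ)`. -/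
def qGen {n : ℕ} (q : Fin n → Fin n → ℂ) (i : Fin n) : RingQuot (QRel n q) :=
  RingQuot.mkAlgHom ℂ (QRel n q) (FreeAlgebra.ι ℂ i)

/-- The monomial `x_α = x_{α 1} ⋯ x_{α d}` associated to a word `α`. -/
def xWord {n d : ℕ} (q : Fin n → Fin n → ℂ) (α : Fin d → Fin n) : RingQuot (QRel n q) :=
  ((List.ofFn α).map (qGen q)).prod

/-- The action of `S_d` on words: `(σ·α) i = α (σ⁻¹ i)`. -/
def permAct {n d : ℕ} (σ : Equiv.Perm (Fin d)) (α : Fin d → Fin n) : Fin d → Fin n :=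
  α ∘ σ.symm

/-- `α` is the sorted word `δ(k)` of the multidegree `k` : the letter `i` repeated
`k i` times, in increasing order. -/
def IsSortedWord {n : ℕ} (k : Fin n → ℕ) {m : ℕ} (α : Fin m → Fin n) : Prop :=
  List.ofFn α = (List.ofFn fun i : Fin n => List.replicate (k i) i).flatten

/-- The set `{ |λ(σ, δ(k))| : σ ∈ S_{|k|} }`, whose minimum is the weight `w_q(k)`. -/
def wSet {n : ℕ} (q : Fin n → Fin n → ℂ) (k : Fin n → ℕ) : Set ℝ :=
  {r | ∃ (σ : Equiv.Perm (Fin (∑ i, k i))) (lam : ℂ) (α : Fin (∑ i, k i) → Fin n),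
    IsSortedWord k α ∧ xWord q α = lam • xWord q (permAct σ α) ∧ r = ‖lam‖}

open Finset

theorem Finset.prod_prod_pow_add_single {ι M : Type*} [Fintype ι] [DecidableEq ι]
    [CommMonoid M] (f : ι → ι → M) (k : ι → ℕ) (a : ι) :
    ∏ i, ∏ j, f i j ^ ((k + Pi.single a 1 : ι → ℕ) i * (k + Pi.single a 1 : ι → ℕ) j) =
      (∏ i, ∏ j, f i j ^ (k i * k j)) * (∏ i, f i a ^ k i) * (∏ j, f a j ^ k j) * f a a := by
  simp only [Pi.add_apply, add_mul, mul_add, pow_add, prod_mul_distrib]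
  simp only [Pi.single_apply, mul_ite, ite_mul, mul_one, one_mul, mul_zero, zero_mul, pow_ite,
    pow_zero, pow_one, prod_ite_eq', mem_univ, if_true, prod_ite_irrel, prod_const_one]
  ac_rfl

namespace QuantumAffineSpace

variable {n : ℕ}

def letterCount (L : List (Fin n)) : Fin n → ℕ := fun j => L.count j

@[simp]
lemma letterCount_nil : letterCount ([] : List (Fin n)) = 0 := by
  funext j
  simp [letterCount]

lemma letterCount_cons (a : Fin n) (L : List (Fin n)) :
    letterCount (a :: L) = letterCount L + Pi.single a 1 := by
  funext j
  rcases eq_or_ne a j with rfl | h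
  · simp [letterCount]
  · simp [letterCount, h, h.symm]

lemma letterCount_eq_zero {L : List (Fin n)} {j : Fin n} (h : j ∉ L) : letterCount L j = 0 :=
  List.count_eq_zero.2 h

variable (q : Fin n → Fin n → ℂ)

/-- The scalar picked up when `x a` is moved past the letters `j < a` of `x^m`. -/
def twistFactor (a : Fin n) (m : Fin n → ℕ) : ℂ := ∏ j ∈ Iio a, q a j ^ m j

lemma twistFactor_add_single (a b : Fin n) (m : Fin n → ℕ) :
    twistFactor q a (m + Pi.single b 1) = twistFactor q a m * if b < a then q a b else 1 := by
  simp only [twistFactor, Pi.add_apply, pow_add, prod_mul_distrib, Pi.single_apply, pow_ite,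
    pow_one, pow_zero, prod_ite_eq', mem_Iio]

lemma twistFactor_mul_twistFactor (hq : MultAntisym n q) (i j : Fin n) (m : Fin n → ℕ) :
    twistFactor q j m * twistFactor q i (m + Pi.single j 1) =
      q i j * (twistFactor q i m * twistFactor q j (m + Pi.single i 1)) := by
  rw [twistFactor_add_single, twistFactor_add_single]
  rcases lt_trichotomy i j with h | rfl | h
  · rw [if_neg h.asymm, if_pos h, ← hq.2 j i]
    ring
  · simp [hq.1 i]
  · rw [if_pos h, if_neg h.asymm]
    ring

lemma twistFactor_letterCount {a : Fin n} {L : List (Fin n)} (h : ∀ b ∈ L, a ≤ b) :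
    twistFactor q a (letterCount L) = 1 :=
  prod_eq_one fun j hj => by
    rw [letterCount_eq_zero fun hjL => (h j hjL).not_gt (mem_Iio.1 hj), pow_zero]

def genAction (a : Fin n) : ((Fin n → ℕ) →₀ ℂ) →ₗ[ℂ] (Fin n → ℕ) →₀ ℂ :=
  Finsupp.lsum ℂ fun m => twistFactor q a m • Finsupp.lsingle (m + Pi.single a 1)

lemma genAction_single (a : Fin n) (m : Fin n → ℕ) (c : ℂ) :
    genAction q a (Finsupp.single m c) =
      twistFactor q a m • Finsupp.single (m + Pi.single a 1) c := by
  simp [genAction]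

lemma genAction_comp (hq : MultAntisym n q) (i j : Fin n) :
    genAction q i ∘ₗ genAction q j = q i j • (genAction q j ∘ₗ genAction q i) := by
  refine Finsupp.lhom_ext fun m c => ?_
  simp only [LinearMap.comp_apply, LinearMap.smul_apply, genAction_single, map_smul, smul_smul]
  rw [add_right_comm, twistFactor_mul_twistFactor q hq i j m]

def monomialRep (hq : MultAntisym n q) :
    RingQuot (QRel n q) →ₐ[ℂ] Module.End ℂ ((Fin n → ℕ) →₀ ℂ) :=
  RingQuot.liftAlgHom ℂ ⟨FreeAlgebra.lift ℂ (genAction q), by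
    rintro _ _ ⟨i, j, rfl, rfl⟩
    simp only [map_mul, map_smul, FreeAlgebra.lift_ι_apply, Module.End.mul_eq_comp]
    exact genAction_comp q hq i j⟩

lemma monomialRep_qGen (hq : MultAntisym n q) (i : Fin n) :
    monomialRep q hq (qGen q i) = genAction q i := by
  rw [qGen, monomialRep, RingQuot.liftAlgHom_mkAlgHom_apply, FreeAlgebra.lift_ι_apply]

/-- The coefficient `c` with `x_L = c • x_{sort L}`. -/
def orderingCoeff : List (Fin n) → ℂ
  | [] => 1
  | a :: L => twistFactor q a (letterCount L) * orderingCoeff L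

lemma monomialRep_prod (hq : MultAntisym n q) (L : List (Fin n)) :
    monomialRep q hq (L.map (qGen q)).prod (Finsupp.single 0 1) =
      orderingCoeff q L • Finsupp.single (letterCount L) 1 := by
  induction L with
  | nil => simp [orderingCoeff]
  | cons a L ih =>
    rw [List.map_cons, List.prod_cons, map_mul, Module.End.mul_apply, ih, map_smul,
      monomialRep_qGen, genAction_single, smul_smul, letterCount_cons, orderingCoeff,
      mul_comm (orderingCoeff q L)]

lemma orderingCoeff_eq_mul_of_prod_eq_smul (hq : MultAntisym n q) {L L' : List (Fin n)}
    {c : ℂ} (h : (L.map (qGen q)).prod = c • (L'.map (qGen q)).prod)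
    (hL : letterCount L = letterCount L') :
    orderingCoeff q L = c * orderingCoeff q L' := by
  have := congrArg (fun x => monomialRep q hq x (Finsupp.single 0 1)) h
  simp only [map_smul, LinearMap.smul_apply, monomialRep_prod, hL, Finsupp.smul_single,
    smul_eq_mul, mul_one] at this
  exact Finsupp.single_injective _ this

lemma qGen_mul_qGen (i j : Fin n) : qGen q i * qGen q j = q i j • (qGen q j * qGen q i) := by
  rw [qGen, qGen, ← map_mul, ← map_mul, ← map_smul]
  exact RingQuot.mkAlgHom_rel ℂ ⟨i, j, rfl, rfl⟩

lemma exists_prod_eq_smul_of_perm {L L' : List (Fin n)} (h : L.Perm L') :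
    ∃ c : ℂ, (L.map (qGen q)).prod = c • (L'.map (qGen q)).prod := by
  induction h with
  | nil => exact ⟨1, by simp⟩
  | cons a _ ih =>
    obtain ⟨c, hc⟩ := ih
    exact ⟨c, by simp only [List.map_cons, List.prod_cons, hc, mul_smul_comm]⟩
  | swap a b L =>
    refine ⟨q b a, ?_⟩
    simp only [List.map_cons, List.prod_cons, ← mul_assoc, qGen_mul_qGen q b a, smul_mul_assoc]
  | trans _ _ ih₁ ih₂ =>
    obtain ⟨c₁, h₁⟩ := ih₁
    obtain ⟨c₂, h₂⟩ := ih₂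
    exact ⟨c₁ * c₂, by rw [h₁, h₂, smul_smul]⟩

lemma orderingCoeff_eq_one {L : List (Fin n)} (h : L.Pairwise (· ≤ ·)) :
    orderingCoeff q L = 1 := by
  induction L with
  | nil => rfl
  | cons a L ih =>
    rw [List.pairwise_cons] at h
    rw [orderingCoeff, twistFactor_letterCount q h.1, ih h.2, one_mul]

def pairWeight (k : Fin n → ℕ) : ℝ :=
  ∏ p ∈ Finset.univ.filter (fun p : Fin n × Fin n => p.1 < p.2), ‖q p.1 p.2‖ ^ (k p.1 * k p.2)

lemma pairWeight_eq_prod_prod (k : Fin n → ℕ) :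
    pairWeight q k = ∏ i, ∏ j, (if i < j then ‖q i j‖ else 1) ^ (k i * k j) := by
  simp only [pairWeight, prod_filter, Fintype.prod_prod_type, ite_pow, one_pow]

lemma pairWeight_add_single (a : Fin n) (k : Fin n → ℕ) :
    pairWeight q (k + Pi.single a 1) =
      pairWeight q k * (∏ i ∈ Iio a, ‖q i a‖ ^ k i) * ∏ j ∈ Ioi a, ‖q a j‖ ^ k j := by
  rw [pairWeight_eq_prod_prod, pairWeight_eq_prod_prod, prod_prod_pow_add_single,
    ← filter_gt_eq_Iio, ← filter_lt_eq_Ioi, prod_filter, prod_filter]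
  simp only [ite_pow, one_pow, lt_irrefl, if_false, mul_one]

lemma norm_mul_norm_swap (hq : MultAntisym n q) (i j : Fin n) : ‖q i j‖ * ‖q j i‖ = 1 := by
  rw [← norm_mul, hq.2 j i, norm_one]

lemma norm_twistFactor_mul (hq : MultAntisym n q) (a : Fin n) (m : Fin n → ℕ) :
    ‖twistFactor q a m‖ * ∏ i ∈ Iio a, ‖q i a‖ ^ m i = 1 := by
  rw [twistFactor, norm_prod, ← prod_mul_distrib]
  exact prod_eq_one fun j _ => by rw [norm_pow, ← mul_pow, norm_mul_norm_swap q hq, one_pow]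

lemma norm_orderingCoeff_cons_mul_pairWeight (hq : MultAntisym n q) (a : Fin n)
    (L : List (Fin n)) :
    ‖orderingCoeff q (a :: L)‖ * pairWeight q (letterCount (a :: L)) =
      ‖orderingCoeff q L‖ * pairWeight q (letterCount L) *
        ∏ j ∈ Ioi a, ‖q a j‖ ^ letterCount L j := by
  rw [orderingCoeff, letterCount_cons, pairWeight_add_single, norm_mul]
  linear_combination (‖orderingCoeff q L‖ * pairWeight q (letterCount L) *
    ∏ j ∈ Ioi a, ‖q a j‖ ^ letterCount L j) * norm_twistFactor_mul q hq a (letterCount L)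

lemma norm_orderingCoeff_mul_pairWeight_le (hq : MultAntisym n q)
    (hle : ∀ i j, i < j → ‖q i j‖ ≤ 1) (L : List (Fin n)) :
    ‖orderingCoeff q L‖ * pairWeight q (letterCount L) ≤ 1 := by
  induction L with
  | nil => simp [orderingCoeff, pairWeight]
  | cons a L ih =>
    rw [norm_orderingCoeff_cons_mul_pairWeight q hq]
    exact mul_le_one₀ ih (by positivity)
      (prod_le_one (fun _ _ => by positivity)
        fun j hj => pow_le_one₀ (norm_nonneg _) (hle a j (mem_Ioi.1 hj)))

lemma norm_orderingCoeff_mul_pairWeight_eq_one (hq : MultAntisym n q) {L : List (Fin n)}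
    (h : L.Pairwise (· ≥ ·)) :
    ‖orderingCoeff q L‖ * pairWeight q (letterCount L) = 1 := by
  induction L with
  | nil => simp [orderingCoeff, pairWeight]
  | cons a L ih =>
    rw [List.pairwise_cons] at h
    rw [norm_orderingCoeff_cons_mul_pairWeight q hq, ih h.2, one_mul]
    exact prod_eq_one fun j hj => by
      rw [letterCount_eq_zero fun hjL => (h.1 j hjL).not_gt (mem_Ioi.1 hj), pow_zero]

lemma norm_orderingCoeff_le_one (hq : MultAntisym n q) (hge : ∀ i j, i < j → 1 ≤ ‖q i j‖)
    (L : List (Fin n)) : ‖orderingCoeff q L‖ ≤ 1 := by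
  induction L with
  | nil => simp [orderingCoeff]
  | cons a L ih =>
    have hfac : ∀ j ∈ Iio a, ‖q a j‖ ≤ 1 := fun j hj => by
      nlinarith [norm_mul_norm_swap q hq a j, hge j a (mem_Iio.1 hj), norm_nonneg (q a j)]
    rw [orderingCoeff, norm_mul, twistFactor, norm_prod]
    exact mul_le_one₀ (prod_le_one (fun _ _ => by positivity)
      fun j hj => by rw [norm_pow]; exact pow_le_one₀ (norm_nonneg _) (hfac j hj))
      (norm_nonneg _) ih

section Words

variable {k : Fin n → ℕ} {d : ℕ}

lemma _root_.IsSortedWord.pairwise_le {α : Fin d → Fin n} (h : IsSortedWord k α) :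
    (List.ofFn α).Pairwise (· ≤ ·) := by
  rw [h, List.pairwise_flatten, List.pairwise_ofFn]
  refine ⟨fun l hl => ?_, fun i j hij x hx y hy => ?_⟩
  · obtain ⟨i, rfl⟩ := List.mem_ofFn.1 hl
    exact List.pairwise_replicate.2 (Or.inr le_rfl)
  · rw [List.eq_of_mem_replicate hx, List.eq_of_mem_replicate hy]
    exact hij.le

lemma _root_.IsSortedWord.letterCount_eq {α : Fin d → Fin n} (h : IsSortedWord k α) :
    letterCount (List.ofFn α) = k := by
  funext j
  rw [letterCount, h]
  simp [List.count_flatten, List.sum_ofFn, List.count_replicate]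

lemma exists_isSortedWord (k : Fin n → ℕ) : ∃ α : Fin (∑ i, k i) → Fin n, IsSortedWord k α := by
  set L := (List.ofFn fun i : Fin n => List.replicate (k i) i).flatten
  have hL : L.length = ∑ i, k i := by simp [L, List.length_flatten, List.sum_ofFn]
  rw [← hL]
  exact ⟨fun t => L[t], List.ofFn_getElem⟩

lemma letterCount_ofFn_permAct (σ : Equiv.Perm (Fin d)) (α : Fin d → Fin n) :
    letterCount (List.ofFn (permAct σ α)) = letterCount (List.ofFn α) :=
  funext fun j => (Equiv.Perm.ofFn_comp_perm σ.symm α).count_eq j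

lemma ofFn_permAct_revPerm (α : Fin d → Fin n) :
    List.ofFn (permAct Fin.revPerm α) = (List.ofFn α).reverse := by
  rw [permAct, Fin.revPerm_symm, List.ofFn_eq_map, List.ofFn_eq_map, ← List.map_reverse,
    List.finRange_reverse, List.map_map]
  rfl

end Words

lemma norm_orderingCoeff_mul_norm_eq_one (hq : MultAntisym n q) {k : Fin n → ℕ} {d : ℕ}
    {σ : Equiv.Perm (Fin d)} {c : ℂ} {α : Fin d → Fin n}
    (hα : IsSortedWord k α) (h : xWord q α = c • xWord q (permAct σ α)) :
    ‖orderingCoeff q (List.ofFn (permAct σ α))‖ * ‖c‖ = 1 := by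
  have := orderingCoeff_eq_mul_of_prod_eq_smul q hq h (letterCount_ofFn_permAct σ α).symm
  rw [orderingCoeff_eq_one q hα.pairwise_le] at this
  rw [mul_comm, ← norm_mul, ← this, norm_one]

theorem isLeast_wSet_pairWeight (hq : MultAntisym n q) (hle : ∀ i j, i < j → ‖q i j‖ ≤ 1)
    (k : Fin n → ℕ) : IsLeast (wSet q k) (pairWeight q k) := by
  constructor
  · obtain ⟨α, hα⟩ := exists_isSortedWord k
    obtain ⟨c, hc⟩ := exists_prod_eq_smul_of_perm q (List.reverse_perm (List.ofFn α)).symm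
    rw [← ofFn_permAct_revPerm] at hc
    refine ⟨Fin.revPerm, c, α, hα, hc, ?_⟩
    have hdesc := norm_orderingCoeff_mul_pairWeight_eq_one q hq
      (L := List.ofFn (permAct Fin.revPerm α))
      (by rw [ofFn_permAct_revPerm]; exact List.pairwise_reverse.2 hα.pairwise_le)
    rw [letterCount_ofFn_permAct, hα.letterCount_eq] at hdesc
    exact (eq_inv_of_mul_eq_one_right hdesc).trans
      (eq_inv_of_mul_eq_one_right (norm_orderingCoeff_mul_norm_eq_one q hq hα hc)).symm
  · rintro _ ⟨σ, c, α, hα, h, rfl⟩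
    have hL := norm_orderingCoeff_mul_pairWeight_le q hq hle (List.ofFn (permAct σ α))
    rw [letterCount_ofFn_permAct, hα.letterCount_eq] at hL
    calc pairWeight q k
        = (‖orderingCoeff q (List.ofFn (permAct σ α))‖ * ‖c‖) * pairWeight q k := by
          rw [norm_orderingCoeff_mul_norm_eq_one q hq hα h, one_mul]
      _ = (‖orderingCoeff q (List.ofFn (permAct σ α))‖ * pairWeight q k) * ‖c‖ := by ring
      _ ≤ ‖c‖ := mul_le_of_le_one_left (norm_nonneg c) hL

theorem isLeast_wSet_one (hq : MultAntisym n q) (hge : ∀ i j, i < j → 1 ≤ ‖q i j‖)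
    (k : Fin n → ℕ) : IsLeast (wSet q k) 1 := by
  constructor
  · obtain ⟨α, hα⟩ := exists_isSortedWord k
    exact ⟨1, 1, α, hα, by rw [one_smul]; rfl, norm_one.symm⟩
  · rintro _ ⟨σ, c, α, hα, h, rfl⟩
    calc 1 = ‖orderingCoeff q (List.ofFn (permAct σ α))‖ * ‖c‖ :=
          (norm_orderingCoeff_mul_norm_eq_one q hq hα h).symm
      _ ≤ ‖c‖ := mul_le_of_le_one_left (norm_nonneg c) (norm_orderingCoeff_le_one q hq hge _)

end QuantumAffineSpace

open QuantumAffineSpace in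
theorem weight_formula (n : ℕ) (q : Fin n → Fin n → ℂ) (hq : MultAntisym n q)
    (w : (Fin n → ℕ) → ℝ) (hw : ∀ k, IsLeast (wSet q k) (w k)) :
    ((∀ i j, i < j → ‖q i j‖ ≤ 1) →
      ∀ k : Fin n → ℕ,
        w k = ∏ p ∈ Finset.univ.filter (fun p : Fin n × Fin n => p.1 < p.2),
          ‖q p.1 p.2‖ ^ (k p.1 * k p.2)) ∧
    ((∀ i j, i < j → 1 ≤ ‖q i j‖) → ∀ k : Fin n → ℕ, w k = 1) :=
  ⟨fun hle k => (hw k).unique (isLeast_wSet_pairWeight q hq hle k),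
    fun hge k => (hw k).unique (isLeast_wSet_one q hq hge k)⟩
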